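/- arXiv:1810.08907 — 2 statements merged into one kernel-verified Lean document; each statement's English description precedes it below -/
import Mathlib

section
/- Let f : ℝⁿ → ℝ be convex with L-Lipschitz gradient, with minimizer x⋆, and let 0 < s ≤ 1/(3L). Define the NAG-C iterates by x₀ = y₀, y_{k+1} = x_k - s∇f(x_k), x_{k+1} = y_{k+1} + (k/(k+3))(y_{k+1} - y_k). Then for all k ≥ 0, min_{0 ≤ i ≤ k} ‖∇f(x_i)‖² ≤ 8568·‖x₀ - x⋆‖²/(s²(k+1)³). -/
/-!
Put `z_k = x_k + (k/2) • (x_k - y_k)`. The iteration becomes the plain gradient recursion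
`z_{k+1} = z_k - (s(k+2)/2) • ∇f(x_k)`, and the energy
`E_k = s k(k+2)/2 · (f(y_k) - f⋆) + ‖z_k - x⋆‖²` drops by at least `s²(k+2)²/6 · ‖∇f(x_k)‖²`
per step: this combines the gradient inequality of convexity at `x_k` (against `x⋆` and `y_k`)
with the descent lemma for the step `y_{k+1} = x_k - s∇f(x_k)`, which gains `5s/6 · ‖∇f(x_k)‖²`
because `Ls ≤ 1/3`. Telescoping gives `∑_{i ≤ k} (i+2)² ‖∇f(x_i)‖² ≤ 6‖x₀ - x⋆‖²/s²`, and
`∑_{i ≤ k} (i+2)² ≥ (k+1)³/3` turns this into the bound, even with constant `18`.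
-/

open Set Finset
open scoped RealInnerProductSpace

section FirstOrder

variable {F : Type*} [NormedAddCommGroup F] [InnerProductSpace ℝ F] [CompleteSpace F]
  {f : F → ℝ} {g : F → F}

theorem hasDerivAt_comp_add_smul (hgrad : ∀ x, HasGradientAt f (g x) x) (a v : F) (t : ℝ) :
    HasDerivAt (fun t : ℝ => f (a + t • v)) ⟪g (a + t • v), v⟫ t := by
  have hline : HasDerivAt (fun t : ℝ => a + t • v) v t := by
    simpa using ((hasDerivAt_id t).smul_const v).const_add a
  have h := (hgrad (a + t • v)).hasFDerivAt.comp_hasDerivAt t hline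
  simp only [InnerProductSpace.toDual_apply_apply] at h
  exact h

theorem ConvexOn.add_inner_gradient_le (hconv : ConvexOn ℝ univ f)
    (hgrad : ∀ x, HasGradientAt f (g x) x) (a b : F) :
    f a + ⟪g a, b - a⟫ ≤ f b := by
  have hline : ConvexOn ℝ univ (fun t : ℝ => f (a + t • (b - a))) := by
    simpa [Function.comp_def, AffineMap.lineMap_apply_module', add_comm]
      using hconv.comp_affineMap (AffineMap.lineMap a b)
  have hslope := hline.le_slope_of_hasDerivAt (mem_univ 0) (mem_univ 1) one_pos
    (hasDerivAt_comp_add_smul hgrad a (b - a) 0)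
  simp only [slope_def_field, zero_smul, add_zero, one_smul, add_sub_cancel, div_one,
    sub_zero] at hslope
  linarith

theorem le_add_inner_gradient_add_sq {L : ℝ} (hgrad : ∀ x, HasGradientAt f (g x) x)
    (hlip : ∀ a b, ‖g a - g b‖ ≤ L * ‖a - b‖) (a b : F) :
    f b ≤ f a + ⟪g a, b - a⟫ + L / 2 * ‖b - a‖ ^ 2 := by
  set v := b - a
  set ψ : ℝ → ℝ := fun t => f (a + t • v) - t * ⟪g a, v⟫ - t ^ 2 * (L / 2 * ‖v‖ ^ 2)
  have hψ : ∀ t : ℝ, HasDerivAt ψ (⟪g (a + t • v) - g a, v⟫ - t * (L * ‖v‖ ^ 2)) t := by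
    intro t
    refine (((hasDerivAt_comp_add_smul hgrad a v t).sub
      ((hasDerivAt_id t).mul_const ⟪g a, v⟫)).sub
      ((hasDerivAt_pow 2 t).mul_const (L / 2 * ‖v‖ ^ 2))).congr_deriv ?_
    simp only [inner_sub_left, one_mul]
    ring
  have hψ_le : ∀ t ∈ interior (Icc (0 : ℝ) 1), deriv ψ t ≤ 0 := by
    intro t ht
    rw [interior_Icc] at ht
    have hgt : ‖g (a + t • v) - g a‖ ≤ L * (t * ‖v‖) := by
      simpa [norm_smul, abs_of_pos ht.1] using hlip (a + t • v) a
    rw [(hψ t).deriv, sub_nonpos]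
    calc ⟪g (a + t • v) - g a, v⟫ ≤ ‖g (a + t • v) - g a‖ * ‖v‖ := real_inner_le_norm _ _
      _ ≤ L * (t * ‖v‖) * ‖v‖ := by gcongr
      _ = t * (L * ‖v‖ ^ 2) := by ring
  have hψ_anti : AntitoneOn ψ (Icc 0 1) :=
    antitoneOn_of_deriv_nonpos (convex_Icc 0 1)
      (Differentiable.continuous fun t => (hψ t).differentiableAt).continuousOn
      (fun t _ => (hψ t).differentiableAt.differentiableWithinAt) hψ_le
  have h01 := hψ_anti (left_mem_Icc.2 zero_le_one) (right_mem_Icc.2 zero_le_one) zero_le_one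
  simp only [ψ, v, zero_smul, add_zero, one_smul, add_sub_cancel, one_pow, one_mul,
    zero_mul, sub_zero, ne_eq, OfNat.ofNat_ne_zero, not_false_eq_true, zero_pow] at h01
  linarith

theorem le_sub_sq_norm_gradient {L : ℝ} (hgrad : ∀ x, HasGradientAt f (g x) x)
    (hlip : ∀ a b, ‖g a - g b‖ ≤ L * ‖a - b‖) (a : F) (s : ℝ) :
    f (a - s • g a) ≤ f a - s * (1 - L * s / 2) * ‖g a‖ ^ 2 := by
  have h := le_add_inner_gradient_add_sq hgrad hlip a (a - s • g a)
  rw [sub_sub_cancel_left, inner_neg_right, real_inner_smul_right, real_inner_self_eq_norm_sq,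
    norm_neg, norm_smul, Real.norm_eq_abs, mul_pow, sq_abs] at h
  linarith

end FirstOrder

theorem Finset.sum_range_le_of_add_le {E d : ℕ → ℝ} (hstep : ∀ k, E (k + 1) + d k ≤ E k)
    (hE : ∀ k, 0 ≤ E k) (n : ℕ) : ∑ i ∈ range n, d i ≤ E 0 :=
  calc ∑ i ∈ range n, d i ≤ ∑ i ∈ range n, (E i - E (i + 1)) :=
        sum_le_sum fun i _ => by linarith [hstep i]
    _ = E 0 - E n := sum_range_sub' E n
    _ ≤ E 0 := sub_le_self _ (hE n)

theorem Finset.exists_sum_mul_le_sum_mul {ι : Type*} {t : Finset ι} (ht : t.Nonempty)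
    {w a : ι → ℝ} (hw : ∀ i ∈ t, 0 ≤ w i) :
    ∃ i ∈ t, (∑ j ∈ t, w j) * a i ≤ ∑ j ∈ t, w j * a j := by
  obtain ⟨i, hi, hmin⟩ := t.exists_min_image a ht
  exact ⟨i, hi, sum_mul t w (a i) ▸
    sum_le_sum fun j hj => mul_le_mul_of_nonneg_left (hmin j hj) (hw j hj)⟩

theorem cube_le_three_mul_sum_range_sq (k : ℕ) :
    ((k : ℝ) + 1) ^ 3 ≤ 3 * ∑ i ∈ range (k + 1), ((i : ℝ) + 2) ^ 2 := by
  induction k with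
  | zero => norm_num
  | succ k ih =>
    rw [sum_range_succ]
    push_cast at ih ⊢
    nlinarith [k.cast_nonneg (α := ℝ)]

section NAGC

variable {F : Type*} [NormedAddCommGroup F] [InnerProductSpace ℝ F]
  {f : F → ℝ} {g : F → F} {s : ℝ} {x y : ℕ → F}

noncomputable def nagcAux (x y : ℕ → F) (k : ℕ) : F := x k + ((k : ℝ) / 2) • (x k - y k)

noncomputable def nagcEnergy (f : F → ℝ) (xstar : F) (s : ℝ) (x y : ℕ → F) (k : ℕ) : ℝ :=
  s * ((k : ℝ) * (k + 2) / 2) * (f (y k) - f xstar) + ‖nagcAux x y k - xstar‖ ^ 2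

theorem nagcAux_succ (hy : ∀ k : ℕ, y (k + 1) = x k - s • g (x k))
    (hx : ∀ k : ℕ, x (k + 1) = y (k + 1) + ((k : ℝ) / ((k : ℝ) + 3)) • (y (k + 1) - y k))
    (k : ℕ) : nagcAux x y (k + 1) = nagcAux x y k - (s * ((k : ℝ) + 2) / 2) • g (x k) := by
  have : (k : ℝ) + 3 ≠ 0 := by positivity
  simp only [nagcAux, hx k, hy k]
  push_cast
  match_scalars <;> field_simp <;> ring

theorem nagcEnergy_zero (f : F → ℝ) (xstar : F) (s : ℝ) (x y : ℕ → F) :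
    nagcEnergy f xstar s x y 0 = ‖x 0 - xstar‖ ^ 2 := by
  simp [nagcEnergy, nagcAux]

theorem nagcEnergy_nonneg {xstar : F} (hmin : ∀ z, f xstar ≤ f z) (hs : 0 ≤ s) (k : ℕ) :
    0 ≤ nagcEnergy f xstar s x y k := by
  have := sub_nonneg.2 (hmin (y k))
  unfold nagcEnergy
  positivity

theorem nagcEnergy_succ_add_le [CompleteSpace F] {L : ℝ} {xstar : F}
    (hgrad : ∀ p, HasGradientAt f (g p) p) (hconv : ConvexOn ℝ univ f)
    (hlip : ∀ a b, ‖g a - g b‖ ≤ L * ‖a - b‖)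
    (hmin : ∀ z, f xstar ≤ f z) (hs : 0 < s) (hLs : L * s ≤ 1 / 3)
    (hy : ∀ k : ℕ, y (k + 1) = x k - s • g (x k))
    (hx : ∀ k : ℕ, x (k + 1) = y (k + 1) + ((k : ℝ) / ((k : ℝ) + 3)) • (y (k + 1) - y k))
    (k : ℕ) :
    nagcEnergy f xstar s x y (k + 1) + s ^ 2 / 6 * ((k : ℝ) + 2) ^ 2 * ‖g (x k)‖ ^ 2
      ≤ nagcEnergy f xstar s x y k := by
  set G := g (x k)
  have hdist : ‖nagcAux x y (k + 1) - xstar‖ ^ 2 = ‖nagcAux x y k - xstar‖ ^ 2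
      - s * (k + 2) * (⟪G, x k - xstar⟫ + k / 2 * ⟪G, x k - y k⟫)
      + (s * (k + 2) / 2) ^ 2 * ‖G‖ ^ 2 := by
    rw [nagcAux_succ hy hx, sub_right_comm, norm_sub_sq_real, real_inner_smul_right,
      norm_smul, Real.norm_eq_abs, mul_pow, sq_abs, real_inner_comm, nagcAux,
      add_sub_right_comm, inner_add_right, real_inner_smul_right]
    ring
  have hopt : f (x k) - f xstar ≤ ⟪G, x k - xstar⟫ := by
    have := hconv.add_inner_gradient_le hgrad (x k) xstar
    rw [← neg_sub, inner_neg_right] at this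
    linarith
  have hprev : f (x k) - f (y k) ≤ ⟪G, x k - y k⟫ := by
    have := hconv.add_inner_gradient_le hgrad (x k) (y k)
    rw [← neg_sub, inner_neg_right] at this
    linarith
  have hdesc : f (y (k + 1)) ≤ f (x k) - 5 * s / 6 * ‖G‖ ^ 2 := by
    calc f (y (k + 1)) ≤ f (x k) - s * (1 - L * s / 2) * ‖G‖ ^ 2 :=
          hy k ▸ le_sub_sq_norm_gradient hgrad hlip (x k) s
      _ ≤ f (x k) - 5 * s / 6 * ‖G‖ ^ 2 := by gcongr; nlinarith
  have hnext := hmin (y (k + 1))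
  rw [nagcEnergy, nagcEnergy, hdist]
  push_cast
  linear_combination (s * (k + 2) ^ 2 / 2) * hdesc + s * (k + 2) * hopt
    + (s * (k + 2) * k / 2) * hprev + (s / 2) * hnext

end NAGC

theorem nag_c_inverse_cubic_gradient_rate_general {n : ℕ}
    (f : EuclideanSpace ℝ (Fin n) → ℝ)
    (g : EuclideanSpace ℝ (Fin n) → EuclideanSpace ℝ (Fin n))
    (L s : ℝ)
    (hgrad : ∀ x, HasGradientAt f (g x) x)
    (hconv : ConvexOn ℝ Set.univ f)
    (hlip : ∀ a b, ‖g a - g b‖ ≤ L * ‖a - b‖)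
    (xstar : EuclideanSpace ℝ (Fin n)) (hmin : ∀ z, f xstar ≤ f z)
    (hs : 0 < s) (hsL : s ≤ 1 / (3 * L))
    (x y : ℕ → EuclideanSpace ℝ (Fin n))
    (hy : ∀ k : ℕ, y (k + 1) = x k - s • g (x k))
    (hx : ∀ k : ℕ, x (k + 1) = y (k + 1) + ((k : ℝ) / ((k : ℝ) + 3)) • (y (k + 1) - y k)) :
    ∀ k : ℕ, ∃ i ≤ k,
      ‖g (x i)‖ ^ 2 ≤ 8568 * ‖x 0 - xstar‖ ^ 2 / (s ^ 2 * ((k : ℝ) + 1) ^ 3) := by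
  have hL : 0 < L := by
    by_contra! hL
    linarith [div_nonpos_of_nonneg_of_nonpos zero_le_one (by linarith : 3 * L ≤ 0)]
  have hLs : L * s ≤ 1 / 3 := by
    rw [le_div_iff₀ (by positivity)] at hsL
    linarith
  intro k
  have hsum : ∑ i ∈ range (k + 1), s ^ 2 / 6 * ((i : ℝ) + 2) ^ 2 * ‖g (x i)‖ ^ 2
      ≤ ‖x 0 - xstar‖ ^ 2 :=
    nagcEnergy_zero f xstar s x y ▸ sum_range_le_of_add_le
      (nagcEnergy_succ_add_le hgrad hconv hlip hmin hs hLs hy hx)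
      (nagcEnergy_nonneg hmin hs.le) (k + 1)
  obtain ⟨i, hi, hmin_i⟩ := exists_sum_mul_le_sum_mul nonempty_range_add_one
    (w := fun j => s ^ 2 / 6 * ((j : ℝ) + 2) ^ 2) (a := fun j => ‖g (x j)‖ ^ 2)
    (fun _ _ => by positivity)
  refine ⟨i, Nat.lt_succ_iff.mp (mem_range.mp hi), ?_⟩
  rw [le_div_iff₀ (by positivity)]
  calc ‖g (x i)‖ ^ 2 * (s ^ 2 * ((k : ℝ) + 1) ^ 3)
      ≤ ‖g (x i)‖ ^ 2 * (s ^ 2 * (3 * ∑ j ∈ range (k + 1), ((j : ℝ) + 2) ^ 2)) := by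
        gcongr; exact cube_le_three_mul_sum_range_sq k
    _ = 18 * ((∑ j ∈ range (k + 1), s ^ 2 / 6 * ((j : ℝ) + 2) ^ 2) * ‖g (x i)‖ ^ 2) := by
        rw [← mul_sum]; ring
    _ ≤ 18 * ‖x 0 - xstar‖ ^ 2 := by gcongr; exact hmin_i.trans hsum
    _ ≤ 8568 * ‖x 0 - xstar‖ ^ 2 := by gcongr; norm_num

/-- NAG-C minimizes the squared gradient norm at an inverse cubic rate. -/
theorem nag_c_inverse_cubic_gradient_rate {n : ℕ}
    (f : EuclideanSpace ℝ (Fin n) → ℝ)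
    (g : EuclideanSpace ℝ (Fin n) → EuclideanSpace ℝ (Fin n))
    (L s : ℝ) (hL : 0 < L)
    (hgrad : ∀ x, HasGradientAt f (g x) x)
    (hconv : ConvexOn ℝ Set.univ f)
    (hlip : ∀ a b, ‖g a - g b‖ ≤ L * ‖a - b‖)
    (xstar : EuclideanSpace ℝ (Fin n)) (hmin : ∀ z, f xstar ≤ f z)
    (hs : 0 < s) (hsL : s ≤ 1 / (3 * L))
    (x y : ℕ → EuclideanSpace ℝ (Fin n)) (h0 : x 0 = y 0)
    (hy : ∀ k : ℕ, y (k + 1) = x k - s • g (x k))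
    (hx : ∀ k : ℕ, x (k + 1) = y (k + 1) + ((k : ℝ) / ((k : ℝ) + 3)) • (y (k + 1) - y k)) :
    ∀ k : ℕ, ∃ i ≤ k,
      ‖g (x i)‖ ^ 2 ≤ 8568 * ‖x 0 - xstar‖ ^ 2 / (s ^ 2 * ((k : ℝ) + 1) ^ 3) :=
  nag_c_inverse_cubic_gradient_rate_general f g L s hgrad hconv hlip xstar hmin hs hsL x y hy hx
end

section
/- Let f : ℝⁿ → ℝ be convex with L-Lipschitz gradient, with minimizer x⋆, and let 0 < s ≤ 1/(3L). Define the NAG-C iterates x₀ = y₀, y_{k+1} = x_k - s∇f(x_k), x_{k+1} = y_{k+1} + (k/(k+3))(y_{k+1} - y_k). Then for all k ≥ 0, f(x_k) - f(x⋆) ≤ 119·‖x₀ - x⋆‖²/(s(k+1)²). -/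
/-!
Lyapunov argument. With `u k = x k + (k / 2) • (x k - y k) - x⋆`, the energy
`E k = (s / 2) (k + 1)² (f (y k) - f x⋆) + ‖u k‖²` is nonincreasing: comparing the gradient step
`x k ↦ y (k + 1)` with the point `z = (k / (k + 2)) • y k + (2 / (k + 2)) • x⋆` gives
`E (k + 1) ≤ E k`, because `x k - z` and `y (k + 1) - z` are the multiples `(2 / (k + 2)) • u k`
and `(2 / (k + 2)) • u (k + 1)`. So `(k + 1)² (f (y k) - f x⋆)` and `‖u k‖` are bounded by
multiples of `‖x 0 - x⋆‖²` and `‖x 0 - x⋆‖`. The bound on `u` propagates to `‖y k - x⋆‖` and to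
the momentum `(k + 1) ‖x k - y k‖`, and smoothness transfers the rate from `y k` to `x k` through
`f x - f x⋆ ≤ 2 (f y - f x⋆) + 2 L ‖x - y‖²`.
-/

open Set InnerProductSpace

section SmoothConvex

variable {E : Type*} [NormedAddCommGroup E] [InnerProductSpace ℝ E] [CompleteSpace E]
  {f : E → ℝ} {g : E → E} {L : ℝ}

-- The mean value inequality gives the constant `L` rather than the sharp `L / 2`, which suffices.
theorem le_add_inner_add_mul_norm_sq_of_lipschitz_gradient (hL : 0 ≤ L)
    (hgrad : ∀ x, HasGradientAt f (g x) x) (hlip : ∀ a b, ‖g a - g b‖ ≤ L * ‖a - b‖)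
    (a b : E) : f b ≤ f a + ⟪g a, b - a⟫_ℝ + L * ‖b - a‖ ^ 2 := by
  have hderiv : ∀ z ∈ segment ℝ a b, HasFDerivWithinAt (fun z => f z - toDual ℝ E (g a) z)
      (toDual ℝ E (g z - g a)) (segment ℝ a b) z := fun z _ => by
    rw [map_sub]
    exact ((hgrad z).hasFDerivAt.sub (toDual ℝ E (g a)).hasFDerivAt).hasFDerivWithinAt
  have hbound : ∀ z ∈ segment ℝ a b, ‖toDual ℝ E (g z - g a)‖ ≤ L * ‖b - a‖ := fun z hz => by
    rw [LinearIsometryEquiv.norm_map]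
    exact (hlip z a).trans (mul_le_mul_of_nonneg_left (norm_sub_le_of_mem_segment hz) hL)
  have hmvt := (convex_segment a b).norm_image_sub_le_of_norm_hasFDerivWithin_le hderiv hbound
    (left_mem_segment ℝ a b) (right_mem_segment ℝ a b)
  rw [toDual_apply_apply, toDual_apply_apply, Real.norm_eq_abs] at hmvt
  rw [inner_sub_right]
  linarith [(le_abs_self _).trans hmvt]

theorem ConvexOn.add_inner_le_of_hasGradientAt {g' a : E} (hf : ConvexOn ℝ univ f)
    (hg : HasGradientAt f g' a) (b : E) : f a + ⟪g', b - a⟫_ℝ ≤ f b := by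
  have hline : HasDerivAt (f ∘ AffineMap.lineMap a b) ⟪g', b - a⟫_ℝ (0 : ℝ) := by
    have hfa := hg.hasFDerivAt
    rw [← AffineMap.lineMap_apply_zero (k := ℝ) a b] at hfa
    simpa [toDual_apply_apply] using hfa.comp_hasDerivAt (0 : ℝ) AffineMap.hasDerivAt_lineMap
  have hslope := (hf.comp_affineMap (AffineMap.lineMap a b)).le_slope_of_hasDerivAt
    (mem_univ 0) (mem_univ 1) one_pos hline
  simp [slope_def_field] at hslope
  linarith

theorem norm_sq_le_of_lipschitz_gradient {m : ℝ} (hL : 0 < L)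
    (hgrad : ∀ x, HasGradientAt f (g x) x) (hlip : ∀ a b, ‖g a - g b‖ ≤ L * ‖a - b‖)
    (hm : ∀ z, m ≤ f z) (a : E) : ‖g a‖ ^ 2 ≤ 4 * L * (f a - m) := by
  set c := (2 * L)⁻¹ with hc
  have hLc : 2 * L * c = 1 := mul_inv_cancel₀ (by positivity)
  have hdesc := le_add_inner_add_mul_norm_sq_of_lipschitz_gradient hL.le hgrad hlip a
    (a - c • g a)
  rw [sub_sub_cancel_left, inner_neg_right, real_inner_smul_right, norm_neg, norm_smul,
    real_inner_self_eq_norm_sq, Real.norm_eq_abs, abs_of_pos (by positivity)] at hdesc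
  have hquad : L * (c * ‖g a‖) ^ 2 = c * ‖g a‖ ^ 2 / 2 := by
    linear_combination (c * ‖g a‖ ^ 2 / 2) * hLc
  have hstep : c * ‖g a‖ ^ 2 ≤ 2 * (f a - m) := by linarith [hm (a - c • g a)]
  calc ‖g a‖ ^ 2 = 2 * L * (c * ‖g a‖ ^ 2) := by linear_combination -‖g a‖ ^ 2 * hLc
    _ ≤ 2 * L * (2 * (f a - m)) := by gcongr
    _ = 4 * L * (f a - m) := by ring

theorem sub_le_two_mul_sub_add_of_lipschitz_gradient {m : ℝ} (hL : 0 < L)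
    (hgrad : ∀ x, HasGradientAt f (g x) x) (hlip : ∀ a b, ‖g a - g b‖ ≤ L * ‖a - b‖)
    (hm : ∀ z, m ≤ f z) (a b : E) : f b - m ≤ 2 * (f a - m) + 2 * L * ‖b - a‖ ^ 2 := by
  have hdesc := le_add_inner_add_mul_norm_sq_of_lipschitz_gradient hL.le hgrad hlip a b
  have hgrad_sq := norm_sq_le_of_lipschitz_gradient hL hgrad hlip hm a
  have hamgm : ‖g a‖ * ‖b - a‖ ≤ (f a - m) + L * ‖b - a‖ ^ 2 := by
    refine le_of_mul_le_mul_left ?_ (by positivity : 0 < 4 * L)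
    nlinarith [sq_nonneg (‖g a‖ - 2 * L * ‖b - a‖)]
  linarith [real_inner_le_norm (g a) (b - a)]

theorem ConvexOn.gradient_step_le (hconv : ConvexOn ℝ univ f) (hL : 0 ≤ L)
    (hgrad : ∀ x, HasGradientAt f (g x) x) (hlip : ∀ a b, ‖g a - g b‖ ≤ L * ‖a - b‖)
    {s : ℝ} (hs : 0 ≤ s) (hLs : L * s ≤ 1 / 2) (a z : E) :
    2 * s * (f (a - s • g a) - f z) ≤ ‖a - z‖ ^ 2 - ‖a - s • g a - z‖ ^ 2 := by
  have hdesc := le_add_inner_add_mul_norm_sq_of_lipschitz_gradient hL hgrad hlip a (a - s • g a)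
  rw [sub_sub_cancel_left, inner_neg_right, real_inner_smul_right, norm_neg, norm_smul,
    real_inner_self_eq_norm_sq, Real.norm_eq_abs, abs_of_nonneg hs] at hdesc
  have hsupp := hconv.add_inner_le_of_hasGradientAt (hgrad a) z
  rw [← neg_sub a z, inner_neg_right] at hsupp
  have hexpand : ‖a - s • g a - z‖ ^ 2
      = ‖a - z‖ ^ 2 - 2 * s * ⟪g a, a - z⟫_ℝ + s ^ 2 * ‖g a‖ ^ 2 := by
    rw [sub_right_comm, norm_sub_sq_real, real_inner_smul_right, real_inner_comm, norm_smul,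
      Real.norm_eq_abs, abs_of_nonneg hs]
    ring
  rw [hexpand]
  nlinarith [mul_nonneg (mul_nonneg hs hs) (sq_nonneg ‖g a‖)]

end SmoothConvex

section NAGC

variable {E : Type*} [NormedAddCommGroup E] [InnerProductSpace ℝ E]

noncomputable def nagVec (xstar : E) (x y : ℕ → E) (k : ℕ) : E :=
  (((k : ℝ) + 2) / 2) • (x k - xstar) - ((k : ℝ) / 2) • (y k - xstar)

noncomputable def nagEnergy (f : E → ℝ) (s : ℝ) (xstar : E) (x y : ℕ → E) (k : ℕ) : ℝ :=
  s / 2 * ((k : ℝ) + 1) ^ 2 * (f (y k) - f xstar) + ‖nagVec xstar x y k‖ ^ 2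

variable {xstar : E} {x y : ℕ → E} {k : ℕ}

theorem nagVec_zero : nagVec xstar x y 0 = x 0 - xstar := by
  simp [nagVec]

theorem nagVec_succ
    (hx : x (k + 1) = y (k + 1) + ((k : ℝ) / ((k : ℝ) + 3)) • (y (k + 1) - y k)) :
    nagVec xstar x y (k + 1) = (y (k + 1) - xstar) + ((k : ℝ) / 2) • (y (k + 1) - y k) := by
  have : (k : ℝ) + 3 ≠ 0 := by positivity
  rw [nagVec, hx]
  push_cast
  match_scalars <;> field_simp <;> ring

theorem nagEnergy_succ_le {f : E → ℝ} {s : ℝ} (hconv : ConvexOn ℝ univ f) (hs : 0 ≤ s)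
    (hmin : f xstar ≤ f (y k))
    (hx : x (k + 1) = y (k + 1) + ((k : ℝ) / ((k : ℝ) + 3)) • (y (k + 1) - y k))
    (hstep : ∀ z, 2 * s * (f (y (k + 1)) - f z) ≤ ‖x k - z‖ ^ 2 - ‖y (k + 1) - z‖ ^ 2) :
    nagEnergy f s xstar x y (k + 1) ≤ nagEnergy f s xstar x y k := by
  set c : ℝ := 2 / ((k : ℝ) + 2) with hc
  have hck : c * ((k : ℝ) + 2) = 2 := div_mul_cancel₀ _ (by positivity)
  have hc0 : 0 < c := by positivity
  have hc1 : 0 ≤ 1 - c := by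
    rw [sub_nonneg, hc, div_le_one (by positivity)]
    linarith [k.cast_nonneg (α := ℝ)]
  set z : E := (1 - c) • y k + c • xstar
  have hxz : x k - z = c • nagVec xstar x y k := by
    simp only [nagVec, z, hc]
    match_scalars <;> field_simp <;> ring
  have hyz : y (k + 1) - z = c • nagVec xstar x y (k + 1) := by
    rw [nagVec_succ hx]
    simp only [z, hc]
    match_scalars <;> field_simp <;> ring
  have hfz : f z ≤ (1 - c) * f (y k) + c * f xstar :=
    hconv.2 (mem_univ _) (mem_univ _) hc1 hc0.le (by ring)
  have hdecr := hstep z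
  rw [hxz, hyz, norm_smul, norm_smul, mul_pow, mul_pow, Real.norm_eq_abs, abs_of_pos hc0]
    at hdecr
  have hnew : s / 2 * ((k : ℝ) + 2) ^ 2 * (f (y (k + 1)) - f z)
      ≤ ‖nagVec xstar x y k‖ ^ 2 - ‖nagVec xstar x y (k + 1)‖ ^ 2 := by
    calc s / 2 * ((k : ℝ) + 2) ^ 2 * (f (y (k + 1)) - f z)
        = ((k : ℝ) + 2) ^ 2 / 4 * (2 * s * (f (y (k + 1)) - f z)) := by ring
      _ ≤ ((k : ℝ) + 2) ^ 2 / 4 *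
          (c ^ 2 * ‖nagVec xstar x y k‖ ^ 2 - c ^ 2 * ‖nagVec xstar x y (k + 1)‖ ^ 2) := by
        gcongr
      _ = ‖nagVec xstar x y k‖ ^ 2 - ‖nagVec xstar x y (k + 1)‖ ^ 2 := by
        linear_combination (‖nagVec xstar x y k‖ ^ 2 - ‖nagVec xstar x y (k + 1)‖ ^ 2) *
          (c * ((k : ℝ) + 2) + 2) / 4 * hck
  have hold : s / 2 * ((k : ℝ) + 2) ^ 2 * (f z - f xstar)
      ≤ s / 2 * ((k : ℝ) + 1) ^ 2 * (f (y k) - f xstar) := by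
    calc s / 2 * ((k : ℝ) + 2) ^ 2 * (f z - f xstar)
        ≤ s / 2 * ((k : ℝ) + 2) ^ 2 * ((1 - c) * (f (y k) - f xstar)) := by
          gcongr
          linarith
      _ = s / 2 * ((k : ℝ) * ((k : ℝ) + 2)) * (f (y k) - f xstar) := by
          linear_combination -(s / 2 * ((k : ℝ) + 2) * (f (y k) - f xstar)) * hck
      _ ≤ s / 2 * ((k : ℝ) + 1) ^ 2 * (f (y k) - f xstar) := by
          gcongr
          linarith
  have hk : ((k + 1 : ℕ) : ℝ) + 1 = (k : ℝ) + 2 := by push_cast; ring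
  rw [nagEnergy, nagEnergy, hk]
  linarith

theorem nagEnergy_le_nagEnergy_zero {f : E → ℝ} {s : ℝ} (hconv : ConvexOn ℝ univ f)
    (hs : 0 ≤ s) (hmin : ∀ z, f xstar ≤ f z)
    (hx : ∀ k : ℕ, x (k + 1) = y (k + 1) + ((k : ℝ) / ((k : ℝ) + 3)) • (y (k + 1) - y k))
    (hstep : ∀ (k : ℕ) z, 2 * s * (f (y (k + 1)) - f z) ≤ ‖x k - z‖ ^ 2 - ‖y (k + 1) - z‖ ^ 2)
    (k : ℕ) : nagEnergy f s xstar x y k ≤ nagEnergy f s xstar x y 0 :=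
  antitone_nat_of_succ_le (fun k => nagEnergy_succ_le hconv hs (hmin _) (hx k) (hstep k))
    (Nat.zero_le k)

theorem nagEnergy_zero_le [CompleteSpace E] {f : E → ℝ} {g : E → E} {L s : ℝ} (hL : 0 < L)
    (hgrad : ∀ x, HasGradientAt f (g x) x) (hlip : ∀ a b, ‖g a - g b‖ ≤ L * ‖a - b‖)
    (hmin : ∀ z, f xstar ≤ f z) (hs : 0 ≤ s) (h0 : x 0 = y 0) :
    nagEnergy f s xstar x y 0 ≤ (1 + s * L) * ‖x 0 - xstar‖ ^ 2 := by
  have := sub_le_two_mul_sub_add_of_lipschitz_gradient hL hgrad hlip hmin xstar (x 0)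
  simp only [nagEnergy, nagVec_zero, ← h0]
  nlinarith

theorem norm_sub_le_of_norm_nagVec_le {M : ℝ}
    (hx : ∀ k : ℕ, x (k + 1) = y (k + 1) + ((k : ℝ) / ((k : ℝ) + 3)) • (y (k + 1) - y k))
    (hu : ∀ k, ‖nagVec xstar x y k‖ ≤ M) (h0 : x 0 = y 0) (k : ℕ) : ‖y k - xstar‖ ≤ M := by
  induction k with
  | zero => simpa [nagVec_zero, h0] using hu 0
  | succ k ih =>
    have hid : (((k : ℝ) + 2) / 2) • (y (k + 1) - xstar)
        = nagVec xstar x y (k + 1) + ((k : ℝ) / 2) • (y k - xstar) := by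
      rw [nagVec_succ (hx k)]
      module
    have hk : (0 : ℝ) ≤ k / 2 := by positivity
    refine le_of_mul_le_mul_left ?_ (by positivity : (0 : ℝ) < ((k : ℝ) + 2) / 2)
    calc ((k : ℝ) + 2) / 2 * ‖y (k + 1) - xstar‖
        = ‖(((k : ℝ) + 2) / 2) • (y (k + 1) - xstar)‖ := by
          rw [norm_smul, Real.norm_of_nonneg (by positivity)]
      _ ≤ ‖nagVec xstar x y (k + 1)‖ + (k : ℝ) / 2 * ‖y k - xstar‖ := by
          rw [hid]
          exact (norm_add_le _ _).trans_eq (by rw [norm_smul, Real.norm_of_nonneg hk])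
      _ ≤ M + (k : ℝ) / 2 * M := by gcongr; exact hu _
      _ = ((k : ℝ) + 2) / 2 * M := by ring

theorem mul_norm_sub_le_of_norm_nagVec_le {M : ℝ}
    (hx : ∀ k : ℕ, x (k + 1) = y (k + 1) + ((k : ℝ) / ((k : ℝ) + 3)) • (y (k + 1) - y k))
    (hu : ∀ k, ‖nagVec xstar x y k‖ ≤ M) (h0 : x 0 = y 0) (k : ℕ) :
    ((k : ℝ) + 1) * ‖x k - y k‖ ≤ 4 * M := by
  cases k with
  | zero => simpa [h0] using (norm_nonneg _).trans (hu 0)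
  | succ k =>
    have hid : (((k : ℝ) + 2) / 2) • (y (k + 1) - y k)
        = nagVec xstar x y (k + 1) - (y k - xstar) := by
      rw [nagVec_succ (hx k)]
      module
    have hdisp : ((k : ℝ) + 2) * ‖y (k + 1) - y k‖ ≤ 4 * M := by
      calc ((k : ℝ) + 2) * ‖y (k + 1) - y k‖
          = 2 * ‖(((k : ℝ) + 2) / 2) • (y (k + 1) - y k)‖ := by
            rw [norm_smul, Real.norm_of_nonneg (by positivity)]
            ring
        _ ≤ 2 * (‖nagVec xstar x y (k + 1)‖ + ‖y k - xstar‖) := by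
            rw [hid]
            gcongr
            exact norm_sub_le _ _
        _ ≤ 2 * (M + M) := by
            gcongr
            exacts [hu _, norm_sub_le_of_norm_nagVec_le hx hu h0 k]
        _ = 4 * M := by ring
    have hmom : (k : ℝ) / ((k : ℝ) + 3) ≤ 1 := by
      rw [div_le_one (by positivity)]
      linarith
    calc (((k + 1 : ℕ) : ℝ) + 1) * ‖x (k + 1) - y (k + 1)‖
        = ((k : ℝ) + 2) * ((k : ℝ) / ((k : ℝ) + 3) * ‖y (k + 1) - y k‖) := by
          rw [hx k, add_sub_cancel_left, norm_smul, Real.norm_of_nonneg (by positivity)]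
          push_cast
          ring
      _ ≤ ((k : ℝ) + 2) * (1 * ‖y (k + 1) - y k‖) := by gcongr
      _ ≤ 4 * M := by rwa [one_mul]

end NAGC

/-- Function value convergence of NAG-C at the accelerated rate. -/
theorem nag_c_function_value_rate {n : ℕ}
    (f : EuclideanSpace ℝ (Fin n) → ℝ)
    (g : EuclideanSpace ℝ (Fin n) → EuclideanSpace ℝ (Fin n))
    (L s : ℝ) (hL : 0 < L)
    (hgrad : ∀ x, HasGradientAt f (g x) x)
    (hconv : ConvexOn ℝ Set.univ f)
    (hlip : ∀ a b, ‖g a - g b‖ ≤ L * ‖a - b‖)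
    (xstar : EuclideanSpace ℝ (Fin n)) (hmin : ∀ z, f xstar ≤ f z)
    (hs : 0 < s) (hsL : s ≤ 1 / (3 * L))
    (x y : ℕ → EuclideanSpace ℝ (Fin n)) (h0 : x 0 = y 0)
    (hy : ∀ k : ℕ, y (k + 1) = x k - s • g (x k))
    (hx : ∀ k : ℕ, x (k + 1) = y (k + 1) + ((k : ℝ) / ((k : ℝ) + 3)) • (y (k + 1) - y k)) :
    ∀ k : ℕ, f (x k) - f xstar ≤ 119 * ‖x 0 - xstar‖ ^ 2 / (s * ((k : ℝ) + 1) ^ 2) := by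
  intro k
  set R := ‖x 0 - xstar‖
  have hLs : s * L ≤ 1 / 3 := by
    rw [le_div_iff₀ (by positivity)] at hsL
    linarith
  have hstep : ∀ k z, 2 * s * (f (y (k + 1)) - f z) ≤ ‖x k - z‖ ^ 2 - ‖y (k + 1) - z‖ ^ 2 :=
    fun k z => hy k ▸ hconv.gradient_step_le hL.le hgrad hlip hs.le (by linarith) (x k) z
  have hE : ∀ k, nagEnergy f s xstar x y k ≤ 4 / 3 * R ^ 2 := fun k =>
    (nagEnergy_le_nagEnergy_zero hconv hs.le hmin hx hstep k).trans <|
      (nagEnergy_zero_le hL hgrad hlip hmin hs.le h0).trans (by gcongr; linarith)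
  have hv : ∀ k : ℕ, s / 2 * ((k : ℝ) + 1) ^ 2 * (f (y k) - f xstar) ≤ 4 / 3 * R ^ 2 := fun k =>
    (le_add_of_nonneg_right (sq_nonneg _)).trans (hE k)
  have hu : ∀ k : ℕ, ‖nagVec xstar x y k‖ ≤ 2 * R := fun k => by
    have hpot : 0 ≤ s / 2 * ((k : ℝ) + 1) ^ 2 * (f (y k) - f xstar) :=
      mul_nonneg (by positivity) (sub_nonneg.2 (hmin _))
    have := (le_add_of_nonneg_left hpot).trans (hE k)
    rw [← sq_le_sq₀ (norm_nonneg _) (by positivity)]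
    nlinarith
  have hD := mul_norm_sub_le_of_norm_nagVec_le hx hu h0 k
  have hval := sub_le_two_mul_sub_add_of_lipschitz_gradient hL hgrad hlip hmin (y k) (x k)
  rw [le_div_iff₀ (by positivity)]
  calc (f (x k) - f xstar) * (s * ((k : ℝ) + 1) ^ 2)
      ≤ (2 * (f (y k) - f xstar) + 2 * L * ‖x k - y k‖ ^ 2) * (s * ((k : ℝ) + 1) ^ 2) := by
        gcongr
    _ = 4 * (s / 2 * ((k : ℝ) + 1) ^ 2 * (f (y k) - f xstar))
          + 2 * (s * L) * (((k : ℝ) + 1) * ‖x k - y k‖) ^ 2 := by ring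
    _ ≤ 4 * (4 / 3 * R ^ 2) + 2 * (1 / 3) * (4 * (2 * R)) ^ 2 := by
        gcongr 4 * ?_ + 2 * ?_ * ?_ ^ 2
        exact hv k
    _ ≤ 119 * R ^ 2 := by nlinarith [sq_nonneg R]
end
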